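/- Let G be a reduced Gröbner basis of I with respect to <, and suppose ω lies in the relative interior of the Gröbner cone of < (i.e., in_ω(g) = in_<(g) for all g ∈ G). Then in_ω(I) = in_<(I) is a monomial ideal and G is also a Gröbner basis of I with respect to the refinement <'_ω for any term ordering <'. -/

import Mathlib

open MvPolynomial

/-- A term ordering on the monomials (exponent vectors) of `k[x_1, …, x_n]`:
a strict total well-ordering compatible with addition of exponents. -/
structure TermOrder (n : ℕ) where
  lt : (Fin n →₀ ℕ) → (Fin n →₀ ℕ) → Prop
  irrefl : ∀ a, ¬ lt a a
  trans : ∀ a b c, lt a b → lt b c → lt a c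
  trichotomous : ∀ a b, lt a b ∨ a = b ∨ lt b a
  wf : WellFounded lt
  add_right : ∀ a b c, lt a b → lt (a + c) (b + c)

variable {n : ℕ}

/-- `α` is the exponent vector of the `t`-leading term of `f`. -/
def TermOrder.IsLeadExp {k : Type*} [CommSemiring k] (t : TermOrder n)
    (f : MvPolynomial (Fin n) k) (α : Fin n →₀ ℕ) : Prop :=
  α ∈ f.support ∧ ∀ β ∈ f.support, β ≠ α → t.lt β α

open Classical in
/-- The exponent vector of the `t`-leading term of `f` (junk value `0` if none exists). -/
noncomputable def TermOrder.leadExp {k : Type*} [CommSemiring k] (t : TermOrder n)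
    (f : MvPolynomial (Fin n) k) : Fin n →₀ ℕ :=
  if h : ∃ α, t.IsLeadExp f α then h.choose else 0

/-- The leading term `in_t(f)` of `f` with respect to the term ordering `t`. -/
noncomputable def TermOrder.leadTerm {k : Type*} [CommSemiring k] (t : TermOrder n)
    (f : MvPolynomial (Fin n) k) : MvPolynomial (Fin n) k :=
  monomial (t.leadExp f) (coeff (t.leadExp f) f)

/-- The initial ideal `in_t(I)` of `I` with respect to the term ordering `t`. -/
noncomputable def initialIdealT {k : Type*} [CommSemiring k] (t : TermOrder n)
    (I : Ideal (MvPolynomial (Fin n) k)) : Ideal (MvPolynomial (Fin n) k) :=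
  Ideal.span { p | ∃ f ∈ I, f ≠ 0 ∧ p = t.leadTerm f }

/-- The `ω`-weight `⟨ω, α⟩` of an exponent vector `α`. -/
noncomputable def wt (ω : Fin n → ℝ) (α : Fin n →₀ ℕ) : ℝ :=
  ∑ i, ω i * (α i : ℝ)

/-- The initial form `in_ω(f)`: the sum of the terms of `f` of maximal `ω`-weight. -/
noncomputable def initialForm {k : Type*} [CommSemiring k] (ω : Fin n → ℝ)
    (f : MvPolynomial (Fin n) k) : MvPolynomial (Fin n) k :=
  ∑ α ∈ f.support.filter (fun α => ∀ β ∈ f.support, wt ω β ≤ wt ω α),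
    monomial α (coeff α f)

/-- The generalized initial ideal `in_ω(I)` of `I` with respect to the weight vector `ω`. -/
noncomputable def initialIdealW {k : Type*} [CommSemiring k] (ω : Fin n → ℝ)
    (I : Ideal (MvPolynomial (Fin n) k)) : Ideal (MvPolynomial (Fin n) k) :=
  Ideal.span { p | ∃ f ∈ I, f ≠ 0 ∧ p = initialForm ω f }

/-- The refinement `<_ω` of the weight vector `ω` by the term ordering `t`:
compare first by `ω`-weight, break ties with `t`. -/
def refineLt (ω : Fin n → ℝ) (t : TermOrder n) (α β : Fin n →₀ ℕ) : Prop :=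
  wt ω α < wt ω β ∨ (wt ω α = wt ω β ∧ t.lt α β)

/-- `G` is a Gröbner basis of `I` w.r.t. `t`: `G ⊆ I` and the leading terms of the
elements of `G` generate the initial ideal `in_t(I)`. -/
def IsGroebnerBasis {k : Type*} [CommSemiring k] (t : TermOrder n)
    (I : Ideal (MvPolynomial (Fin n) k)) (G : Finset (MvPolynomial (Fin n) k)) : Prop :=
  (∀ g ∈ G, g ∈ I) ∧
    Ideal.span ((fun g => t.leadTerm g) '' (G : Set (MvPolynomial (Fin n) k)))
      = initialIdealT t I

open Classical in
/-- `G` is the reduced (marked) Gröbner basis of `I` w.r.t. `t`: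
a Gröbner basis that is minimal, monic and reduced. -/
def IsReducedGB {k : Type*} [CommSemiring k] (t : TermOrder n)
    (I : Ideal (MvPolynomial (Fin n) k)) (G : Finset (MvPolynomial (Fin n) k)) : Prop :=
  IsGroebnerBasis t I G ∧
  (∀ g ∈ G, coeff (t.leadExp g) g = 1) ∧
  (∀ g ∈ G, ∀ g' ∈ G, g ≠ g' → ∀ α ∈ g.support, ¬ t.leadExp g' ≤ α) ∧
  (∀ g ∈ G, ¬ IsGroebnerBasis t I (G.erase g))

/-! The key fact is that every exponent `β` of maximal `ω`-weight in some `f ∈ I` is divisible by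
a leading exponent of `G`. Induct on the `t`-leading term `c x^α` of `f`: some `x^(in_t g)` divides
`x^α`, and if `β ≠ α` replace `f` by `f - c x^δ g` with `δ + in_t g = α` (`g` is monic). All terms
of `x^δ g` other than `x^α` have `ω`-weight below `wt α ≤ wt β`, so `β` survives, still has maximal
weight, and the `t`-leading exponent drops. Hence `in_ω(f)` lies in the monomial ideal
`⟨x^(in_t g)⟩ = in_t(I)`, and the `<'_ω`-leading exponent of `f`, being of maximal weight, is
divisible by some `in_t g`, which is also the `<'_ω`-leading exponent of `g`.
-/

namespace TermOrder

variable (t : TermOrder n)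

theorem exists_max (s : Finset (Fin n →₀ ℕ)) (hs : s.Nonempty) :
    ∃ α ∈ s, ∀ β ∈ s, β ≠ α → t.lt β α := by
  induction hs using Finset.Nonempty.cons_induction with
  | singleton a =>
    exact ⟨a, Finset.mem_singleton_self a, fun β hβ hne => (hne (Finset.mem_singleton.1 hβ)).elim⟩
  | cons a s ha hs ih =>
    obtain ⟨m, hm, hmax⟩ := ih
    rcases t.trichotomous a m with ham | rfl | hma
    · refine ⟨m, Finset.mem_cons_of_mem hm, fun β hβ hne => ?_⟩
      rcases Finset.mem_cons.1 hβ with rfl | hβs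
      exacts [ham, hmax β hβs hne]
    · exact (ha hm).elim
    · refine ⟨a, Finset.mem_cons_self a s, fun β hβ hne => ?_⟩
      rcases Finset.mem_cons.1 hβ with rfl | hβs
      · exact (hne rfl).elim
      by_cases hβm : β = m
      · exact hβm ▸ hma
      · exact t.trans _ _ _ (hmax β hβs hβm) hma

variable {k : Type*} [CommSemiring k]

theorem isLeadExp_leadExp {f : MvPolynomial (Fin n) k} (hf : f ≠ 0) :
    t.IsLeadExp f (t.leadExp f) := by
  have h : ∃ α, t.IsLeadExp f α := t.exists_max f.support (support_nonempty.2 hf)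
  rw [leadExp, dif_pos h]
  exact h.choose_spec

theorem leadExp_mem_support {f : MvPolynomial (Fin n) k} (hf : f ≠ 0) :
    t.leadExp f ∈ f.support :=
  (t.isLeadExp_leadExp hf).1

theorem lt_leadExp {f : MvPolynomial (Fin n) k} (hf : f ≠ 0) {β : Fin n →₀ ℕ}
    (hβ : β ∈ f.support) (hne : β ≠ t.leadExp f) : t.lt β (t.leadExp f) :=
  (t.isLeadExp_leadExp hf).2 β hβ hne

theorem leadExp_mem_support_leadTerm {f : MvPolynomial (Fin n) k} (hf : f ≠ 0) :
    t.leadExp f ∈ (t.leadTerm f).support := by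
  rw [leadTerm, mem_support_iff, coeff_monomial, if_pos rfl, ← mem_support_iff]
  exact t.leadExp_mem_support hf

theorem leadExp_eq_of_isLeadExp {f : MvPolynomial (Fin n) k} {α : Fin n →₀ ℕ}
    (h : t.IsLeadExp f α) : t.leadExp f = α := by
  have hf : f ≠ 0 := by rintro rfl; simpa using h.1
  by_contra hne
  exact t.irrefl _
    (t.trans _ _ _ (h.2 _ (t.leadExp_mem_support hf) hne) (t.lt_leadExp hf h.1 (Ne.symm hne)))

theorem ne_zero_of_coeff_leadExp_eq_one [Nontrivial k] {g : MvPolynomial (Fin n) k}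
    (hg : coeff (t.leadExp g) g = 1) : g ≠ 0 := by
  rintro rfl
  simp at hg

theorem leadTerm_eq_monomial_one {g : MvPolynomial (Fin n) k} (hg : coeff (t.leadExp g) g = 1) :
    t.leadTerm g = monomial (t.leadExp g) 1 := by
  rw [leadTerm, hg]

end TermOrder

theorem wt_add (ω : Fin n → ℝ) (α β : Fin n →₀ ℕ) : wt ω (α + β) = wt ω α + wt ω β := by
  simp only [wt, Finsupp.add_apply, Nat.cast_add, mul_add, Finset.sum_add_distrib]

section GroebnerBasis

variable {k : Type*} [CommSemiring k] {t : TermOrder n} {I : Ideal (MvPolynomial (Fin n) k)}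
  {G : Finset (MvPolynomial (Fin n) k)}

theorem span_leadTerm_eq_span_monomial_leadExp (hmonic : ∀ g ∈ G, coeff (t.leadExp g) g = 1) :
    Ideal.span ((fun g => t.leadTerm g) '' (G : Set (MvPolynomial (Fin n) k))) =
      Ideal.span ((fun α => monomial α (1 : k)) ''
        ((fun g => t.leadExp g) '' (G : Set (MvPolynomial (Fin n) k)))) := by
  rw [Set.image_image]
  exact congrArg _ (Set.image_congr fun g hg => t.leadTerm_eq_monomial_one (hmonic g hg))

theorem isGroebnerBasis_iff_exists_leadExp_le [Nontrivial k] (hGI : ∀ g ∈ G, g ∈ I)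
    (hmonic : ∀ g ∈ G, coeff (t.leadExp g) g = 1) :
    IsGroebnerBasis t I G ↔ ∀ f ∈ I, f ≠ 0 → ∃ g ∈ G, t.leadExp g ≤ t.leadExp f := by
  have hsupp : ∀ f : MvPolynomial (Fin n) k, (t.leadTerm f).support ⊆ {t.leadExp f} :=
    fun f => support_monomial_subset
  rw [IsGroebnerBasis, and_iff_right hGI, span_leadTerm_eq_span_monomial_leadExp hmonic]
  constructor
  · intro hJ f hf hf0
    have hmem : t.leadTerm f ∈ initialIdealT t I := Ideal.subset_span ⟨f, hf, hf0, rfl⟩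
    rw [← hJ, mem_ideal_span_monomial_image] at hmem
    obtain ⟨_, ⟨g, hg, rfl⟩, hle⟩ := hmem _ (t.leadExp_mem_support_leadTerm hf0)
    exact ⟨g, hg, hle⟩
  · intro hdiv
    refine le_antisymm ?_ ?_
    · rw [← span_leadTerm_eq_span_monomial_leadExp hmonic, Ideal.span_le]
      rintro _ ⟨g, hg, rfl⟩
      exact Ideal.subset_span ⟨g, hGI g hg, t.ne_zero_of_coeff_leadExp_eq_one (hmonic g hg), rfl⟩
    · rw [initialIdealT, Ideal.span_le]
      rintro _ ⟨f, hf, hf0, rfl⟩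
      refine mem_ideal_span_monomial_image.2 fun β hβ => ?_
      obtain ⟨g, hg, hle⟩ := hdiv f hf hf0
      exact ⟨_, ⟨g, hg, rfl⟩, Finset.mem_singleton.1 (hsupp f hβ) ▸ hle⟩

end GroebnerBasis

section Weights

variable {k : Type*} [CommSemiring k] {ω : Fin n → ℝ}

theorem mem_support_initialForm {f : MvPolynomial (Fin n) k} {β : Fin n →₀ ℕ} :
    β ∈ (initialForm ω f).support ↔ β ∈ f.support ∧ ∀ γ ∈ f.support, wt ω γ ≤ wt ω β := by
  classical
  rw [mem_support_iff, initialForm, coeff_sum]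
  simp only [coeff_monomial, Finset.sum_ite_eq', Finset.mem_filter]
  split_ifs with h
  exacts [iff_of_true (mem_support_iff.1 h.1) h, iff_of_false (not_not.2 rfl) h]

theorem wt_lt_of_initialForm_eq_leadTerm {t : TermOrder n} {g : MvPolynomial (Fin n) k}
    (hg : g ≠ 0) (h : initialForm ω g = t.leadTerm g) {β : Fin n →₀ ℕ} (hβ : β ∈ g.support)
    (hne : β ≠ t.leadExp g) : wt ω β < wt ω (t.leadExp g) := by
  have hlead : t.leadExp g ∈ (initialForm ω g).support := h ▸ t.leadExp_mem_support_leadTerm hg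
  have hβ' : β ∉ (initialForm ω g).support := by
    rw [h]
    exact fun hb => hne (Finset.mem_singleton.1 (support_monomial_subset hb))
  rw [mem_support_initialForm] at hlead hβ'
  push Not at hβ'
  obtain ⟨γ, hγ, hlt⟩ := hβ' hβ
  exact hlt.trans_le (hlead.2 γ hγ)

theorem wt_le_wt_leadExp_of_lt_eq_refineLt {t' t'' : TermOrder n} (h : t''.lt = refineLt ω t')
    {f : MvPolynomial (Fin n) k} (hf : f ≠ 0) {γ : Fin n →₀ ℕ} (hγ : γ ∈ f.support) :
    wt ω γ ≤ wt ω (t''.leadExp f) := by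
  by_cases hne : γ = t''.leadExp f
  · rw [hne]
  have hlt := t''.lt_leadExp hf hγ hne
  rw [h] at hlt
  rcases hlt with hlt | ⟨heq, -⟩
  exacts [hlt.le, heq.le]

theorem leadExp_eq_of_lt_eq_refineLt {t t' t'' : TermOrder n} (h : t''.lt = refineLt ω t')
    {g : MvPolynomial (Fin n) k} (hg : g ≠ 0)
    (hwt : ∀ β ∈ g.support, β ≠ t.leadExp g → wt ω β < wt ω (t.leadExp g)) :
    t''.leadExp g = t.leadExp g :=
  t''.leadExp_eq_of_isLeadExp
    ⟨t.leadExp_mem_support hg, fun β hβ hne => h ▸ Or.inl (hwt β hβ hne)⟩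

theorem lt_of_mem_support_monomial_mul {t : TermOrder n} {g : MvPolynomial (Fin n) k}
    (hg : g ≠ 0) (hwt : ∀ β ∈ g.support, β ≠ t.leadExp g → wt ω β < wt ω (t.leadExp g))
    {δ γ : Fin n →₀ ℕ} {c : k} (hγ : γ ∈ (monomial δ c * g).support)
    (hne : γ ≠ δ + t.leadExp g) :
    wt ω γ < wt ω (δ + t.leadExp g) ∧ t.lt γ (δ + t.leadExp g) := by
  classical
  obtain ⟨d, hd, β, hβ, rfl⟩ := Finset.mem_add.1 (support_mul _ _ hγ)
  rw [Finset.mem_singleton.1 (support_monomial_subset hd)] at hne ⊢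
  have hβe : β ≠ t.leadExp g := fun h => hne (h ▸ rfl)
  refine ⟨?_, ?_⟩
  · rw [wt_add, wt_add]
    linarith [hwt β hβ hβe]
  · simpa only [add_comm δ] using t.add_right _ _ δ (t.lt_leadExp hg hβ hβe)

end Weights

section Relint

variable {k : Type*} [CommRing k] [Nontrivial k] {t : TermOrder n} {ω : Fin n → ℝ}
  {I : Ideal (MvPolynomial (Fin n) k)} {G : Finset (MvPolynomial (Fin n) k)}

theorem exists_leadExp_le_of_wt_max (hGB : IsGroebnerBasis t I G)
    (hmonic : ∀ g ∈ G, coeff (t.leadExp g) g = 1)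
    (hrep : ∀ g ∈ G, initialForm ω g = t.leadTerm g)
    {f : MvPolynomial (Fin n) k} (hf : f ∈ I) {β : Fin n →₀ ℕ} (hβ : β ∈ f.support)
    (hmax : ∀ γ ∈ f.support, wt ω γ ≤ wt ω β) : ∃ g ∈ G, t.leadExp g ≤ β := by
  classical
  induction f using (InvImage.wf (fun f : MvPolynomial (Fin n) k => t.leadExp f) t.wf).induction
    with | _ f ih
  have hf0 : f ≠ 0 := by rintro rfl; simp at hβ
  obtain ⟨g, hg, hle⟩ :=
    (isGroebnerBasis_iff_exists_leadExp_le hGB.1 hmonic).1 hGB f hf hf0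
  set α := t.leadExp f
  by_cases hβα : β = α
  · exact ⟨g, hg, hβα ▸ hle⟩
  have hg0 : g ≠ 0 := t.ne_zero_of_coeff_leadExp_eq_one (hmonic g hg)
  have hδ : (α - t.leadExp g) + t.leadExp g = α := tsub_add_cancel_of_le hle
  set r := monomial (α - t.leadExp g) (coeff α f) * g
  have hr : ∀ γ ∈ r.support, γ ≠ α → wt ω γ < wt ω α ∧ t.lt γ α := fun γ hγ hne => by
    simpa only [hδ] using lt_of_mem_support_monomial_mul hg0
      (fun _ => wt_lt_of_initialForm_eq_leadTerm hg0 (hrep g hg)) hγ (by rwa [hδ])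
  have hrα : coeff α r = coeff α f := by
    have := coeff_monomial_mul (t.leadExp g) (α - t.leadExp g) (coeff α f) g
    rwa [hδ, hmonic g hg, mul_one] at this
  have hα_le : wt ω α ≤ wt ω β := hmax α (t.leadExp_mem_support hf0)
  have hsupp : ∀ γ ∈ (f - r).support, γ ≠ α ∧ (γ ∈ f.support ∨ γ ∈ r.support) := fun γ hγ =>
    ⟨by rintro rfl; simp [mem_support_iff, hrα] at hγ, Finset.mem_union.1 (support_sub _ _ _ hγ)⟩
  have hβ' : β ∈ (f - r).support := by
    have hβr : β ∉ r.support := fun h => ((hr β h hβα).1.trans_le hα_le).false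
    rwa [mem_support_iff, coeff_sub, notMem_support_iff.1 hβr, sub_zero, ← mem_support_iff]
  have hmax' : ∀ γ ∈ (f - r).support, wt ω γ ≤ wt ω β := by
    intro γ hγ
    obtain ⟨hγα, hγf | hγr⟩ := hsupp γ hγ
    exacts [hmax γ hγf, ((hr γ hγr hγα).1.trans_le hα_le).le]
  have hlt : t.lt (t.leadExp (f - r)) α := by
    have hne : f - r ≠ 0 := by rintro h; simp [h] at hβ'
    obtain ⟨hγα, hγf | hγr⟩ := hsupp _ (t.leadExp_mem_support hne)
    exacts [t.lt_leadExp hf0 hγf hγα, (hr _ hγr hγα).2]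
  exact ih (f - r) hlt (I.sub_mem hf (I.mul_mem_left _ (hGB.1 g hg))) hβ' hmax'

theorem initialIdealW_eq_initialIdealT (hGB : IsGroebnerBasis t I G)
    (hmonic : ∀ g ∈ G, coeff (t.leadExp g) g = 1)
    (hrep : ∀ g ∈ G, initialForm ω g = t.leadTerm g) :
    initialIdealW ω I = initialIdealT t I := by
  refine le_antisymm ?_ ?_
  · rw [initialIdealW, Ideal.span_le, ← hGB.2, span_leadTerm_eq_span_monomial_leadExp hmonic]
    rintro _ ⟨f, hf, -, rfl⟩
    refine mem_ideal_span_monomial_image.2 fun β hβ => ?_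
    rw [mem_support_initialForm] at hβ
    obtain ⟨g, hg, hle⟩ := exists_leadExp_le_of_wt_max hGB hmonic hrep hf hβ.1 hβ.2
    exact ⟨_, ⟨g, hg, rfl⟩, hle⟩
  · rw [← hGB.2, Ideal.span_le]
    rintro _ ⟨g, hg, rfl⟩
    exact Ideal.subset_span
      ⟨g, hGB.1 g hg, t.ne_zero_of_coeff_leadExp_eq_one (hmonic g hg), (hrep g hg).symm⟩

theorem isGroebnerBasis_of_lt_eq_refineLt (hGB : IsGroebnerBasis t I G)
    (hmonic : ∀ g ∈ G, coeff (t.leadExp g) g = 1)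
    (hrep : ∀ g ∈ G, initialForm ω g = t.leadTerm g) {t' t'' : TermOrder n}
    (h : t''.lt = refineLt ω t') : IsGroebnerBasis t'' I G := by
  have hlead : ∀ g ∈ G, t''.leadExp g = t.leadExp g := fun g hg =>
    have hg0 := t.ne_zero_of_coeff_leadExp_eq_one (hmonic g hg)
    leadExp_eq_of_lt_eq_refineLt h hg0 fun _ => wt_lt_of_initialForm_eq_leadTerm hg0 (hrep g hg)
  refine (isGroebnerBasis_iff_exists_leadExp_le hGB.1 fun g hg => hlead g hg ▸ hmonic g hg).2
    fun f hf hf0 => ?_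
  obtain ⟨g, hg, hle⟩ := exists_leadExp_le_of_wt_max hGB hmonic hrep hf
    (t''.leadExp_mem_support hf0) fun _ => wt_le_wt_leadExp_of_lt_eq_refineLt h hf0
  exact ⟨g, hg, (hlead g hg).symm ▸ hle⟩

end Relint

theorem relint_weight_vector_general {k : Type*} [Field k] (t : TermOrder n)
    (I : Ideal (MvPolynomial (Fin n) k)) (G : Finset (MvPolynomial (Fin n) k))
    (hG : IsReducedGB t I G) (ω : Fin n → ℝ)
    (hrep : ∀ g ∈ G, initialForm ω g = t.leadTerm g) :
    initialIdealW ω I = initialIdealT t I ∧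
    (∃ S : Set (Fin n →₀ ℕ),
        initialIdealW ω I = Ideal.span ((fun α => (monomial α (1 : k))) '' S)) ∧
    ∀ t' t'' : TermOrder n, t''.lt = refineLt ω t' → IsGroebnerBasis t'' I G := by
  obtain ⟨hGB, hmonic, -, -⟩ := hG
  have hW := initialIdealW_eq_initialIdealT hGB hmonic hrep
  have hmonomial := hGB.2.symm.trans (span_leadTerm_eq_span_monomial_leadExp hmonic)
  exact ⟨hW, ⟨_, hW.trans hmonomial⟩, fun _ _ => isGroebnerBasis_of_lt_eq_refineLt hGB hmonic hrep⟩

/-- If `ω` lies in the relative interior of the Gröbner cone of `t`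
(each element of the reduced Gröbner basis `G` has `in_ω(g) = in_t(g)`), then
`in_ω(I) = in_t(I)` is a monomial ideal, and `G` is a Gröbner basis of `I` with respect
to the refinement of `ω` by any term ordering. -/
theorem relint_weight_vector {k : Type*} [Field k] (t : TermOrder n)
    (I : Ideal (MvPolynomial (Fin n) k)) (G : Finset (MvPolynomial (Fin n) k))
    (hG : IsReducedGB t I G) (ω : Fin n → ℝ) (hω : ∀ i, 0 ≤ ω i)
    (hrep : ∀ g ∈ G, initialForm ω g = t.leadTerm g) :
    initialIdealW ω I = initialIdealT t I ∧
    (∃ S : Set (Fin n →₀ ℕ),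
        initialIdealW ω I = Ideal.span ((fun α => (monomial α (1 : k))) '' S)) ∧
    ∀ t' t'' : TermOrder n, t''.lt = refineLt ω t' → IsGroebnerBasis t'' I G :=
  relint_weight_vector_general t I G hG ω hrep
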